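/- Suppose $\delta = -\tilde B^T P z \|Q\|^2 - \hat E Q + E Q$ where $z \in \mathbb{R}^n$, $P \in \mathbb{R}^{n\times n}$ symmetric, $\tilde B \in \mathbb{R}^{n\times m}$, $Q \in \mathbb{R}^m$, $E, \hat E \in \mathbb{R}^{m\times m}$, and let $e_E = E - \hat E$. Then $-\|z\|^2 + 2 z^T P \tilde B \delta \le -\|z\|^2 + \tfrac{1}{2}\|e_E\|_F^2$. -/

import Mathlib

open Matrix

/-! Writing `w = B̃ᵀPz`, symmetry of `P` turns `zᵀPB̃δ` into `w ⬝ δ = -‖Q‖²‖w‖² + w ⬝ (e_E Q)`.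
The cross term is bounded entrywise by completing the square,
`2 wᵢ (e_E)ᵢⱼ Qⱼ ≤ 2 Qⱼ² wᵢ² + (e_E)ᵢⱼ² / 2`, and summing over `i, j` absorbs the
`-2‖Q‖²‖w‖²` term, leaving `‖e_E‖_F² / 2`. -/

theorem Matrix.IsSymm.dotProduct_mulVec_mulVec {α ι κ : Type*} [CommSemiring α]
    [Fintype ι] [Fintype κ] {P : Matrix ι ι α} (hP : P.IsSymm) (B : Matrix ι κ α)
    (z : ι → α) (v : κ → α) :
    z ⬝ᵥ (P *ᵥ (B *ᵥ v)) = (Bᵀ *ᵥ (P *ᵥ z)) ⬝ᵥ v := by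
  have hzP : z ᵥ* P = P *ᵥ z := by rw [← mulVec_transpose, hP.eq]
  rw [dotProduct_mulVec, dotProduct_mulVec, hzP, mulVec_transpose]

theorem two_mul_dotProduct_mulVec_le {R ι κ : Type*} [Field R] [LinearOrder R]
    [IsStrictOrderedRing R] [Fintype ι] [Fintype κ]
    (w : ι → R) (M : Matrix ι κ R) (q : κ → R) :
    2 * (w ⬝ᵥ (M *ᵥ q)) ≤
      2 * (∑ j, q j ^ 2) * (∑ i, w i ^ 2) + (1 / 2) * ∑ i, ∑ j, M i j ^ 2 := by
  have h_cross : w ⬝ᵥ (M *ᵥ q) = ∑ i, ∑ j, w i * (M i j * q j) := by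
    simp only [dotProduct, mulVec, Finset.mul_sum]
  have h_norms : (∑ j, q j ^ 2) * (∑ i, w i ^ 2) = ∑ i, ∑ j, q j ^ 2 * w i ^ 2 := by
    rw [Finset.sum_mul_sum, Finset.sum_comm]
  rw [h_cross, mul_assoc, h_norms]
  simp only [Finset.mul_sum, ← Finset.sum_add_distrib]
  gcongr with i _ j _
  nlinarith [sq_nonneg (2 * w i * q j - M i j)]

/-- Substituting the robust control term `δ = -B̃ᵀPz‖Q‖² - ÊQ + EQ` into the Lyapunov
derivative and completing the square yields
`-‖z‖² + 2 zᵀPB̃δ ≤ -‖z‖² + (1/2)‖e_E‖_F²`. -/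
theorem robust_lyapunov_bound {n m : ℕ}
    (z : Fin n → ℝ) (P : Matrix (Fin n) (Fin n) ℝ) (B : Matrix (Fin n) (Fin m) ℝ)
    (Q : Fin m → ℝ) (E Ehat : Matrix (Fin m) (Fin m) ℝ) (δ : Fin m → ℝ)
    (hPsym : P.IsSymm)
    (hδ : δ = -(∑ k, (Q k) ^ 2) • (Bᵀ *ᵥ (P *ᵥ z)) - Ehat *ᵥ Q + E *ᵥ Q) :
    -(∑ i, (z i) ^ 2) + 2 * (z ⬝ᵥ (P *ᵥ (B *ᵥ δ))) ≤
      -(∑ i, (z i) ^ 2) + (1 / 2) * (∑ i, ∑ j, ((E - Ehat) i j) ^ 2) := by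
  set w := Bᵀ *ᵥ (P *ᵥ z)
  have h_norm : w ⬝ᵥ w = ∑ i, w i ^ 2 := by simp only [dotProduct, sq]
  have h_subst : w ⬝ᵥ δ = -(∑ k, Q k ^ 2) * ∑ i, w i ^ 2 + w ⬝ᵥ ((E - Ehat) *ᵥ Q) := by
    rw [hδ, dotProduct_add, dotProduct_sub, dotProduct_smul, sub_mulVec, dotProduct_sub,
      smul_eq_mul, h_norm]
    ring
  rw [hPsym.dotProduct_mulVec_mulVec, h_subst]
  linarith [two_mul_dotProduct_mulVec_le w (E - Ehat) Q]
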